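/- Let λ ∈ (0,1] be a real number and k ≥ 0 a fixed integer. Let (n_j) and (M_j) be sequences of positive integers with k ≤ n_j ≤ M_j for all j, both tending to infinity, such that n_j/M_j → λ as j → ∞, and for each j let 𝓝_j be a subset of size n_j of a set 𝓜_j of size M_j. Then the normalized second moments S₂(k;M_j,n_j) := (1/(n_j² M_j^{n_j})) Σ_{x ∈ 𝓜_j^{n_j}} m_k(x)² converge to ((λ^k/k!)·e^{−λ})² as j → ∞. -/

import Mathlib

/-!
Expanding `m_k(x)² = ∑_{y,z ∈ 𝓝} [y and z both occur exactly k times in x]` and summing over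
`x`, the diagonal terms contribute `n · C(n,k) (M-1)^(n-k)` and the off-diagonal ones
`n (n-1) · C(n,k) C(n-k,k) (M-2)^(n-2k)`: once the fibres over one or two points are prescribed,
the remaining coordinates range freely over the other `M - 1` or `M - 2` values. After
normalisation the diagonal part is `O(1/n)`, while `C(n,k)/M^k → λ^k/k!` and
`(1 - 2/M)^(n-2k) → e^(-2λ)` make the off-diagonal part tend to `(λ^k e^(-λ)/k!)²`.
-/

open Filter Finset Fintype Asymptotics

section Limits

variable {β : Type*} {l : Filter β}

theorem tendsto_choose_div_pow {c : β → ℕ} {f : β → ℝ} {lam : ℝ} (hc : Tendsto c l atTop)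
    (hratio : Tendsto (fun j => (c j : ℝ) / f j) l (nhds lam)) (k : ℕ) :
    Tendsto (fun j => ((c j).choose k : ℝ) / f j ^ k) l (nhds (lam ^ k / k.factorial)) := by
  have hequiv : (fun j => ((c j).choose k : ℝ) / f j ^ k) ~[l]
      fun j => ((c j : ℝ) / f j) ^ k / k.factorial := by
    refine (((isEquivalent_choose k).comp_tendsto hc).div IsEquivalent.refl).congr_right ?_
    exact .of_eq (funext fun j => by
      simp only [Pi.div_apply, Function.comp_apply, div_pow, div_right_comm])
  exact hequiv.tendsto_nhds_iff.mpr ((hratio.pow k).div_const _)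

theorem tendsto_one_add_div_pow_exp_of_tendsto_div {c : β → ℕ} {f : β → ℝ} {lam : ℝ}
    (hf : Tendsto f l atTop) (hratio : Tendsto (fun j => (c j : ℝ) / f j) l (nhds lam)) (t : ℝ) :
    Tendsto (fun j => (1 + t / f j) ^ c j) l (nhds (Real.exp (lam * t))) := by
  have hlog : Tendsto (fun j => (c j : ℝ) / f j * (f j * Real.log (1 + t / f j))) l
      (nhds (lam * t)) :=
    hratio.mul ((Real.tendsto_mul_log_one_add_div_atTop t).comp hf)
  have hbase : Tendsto (fun j => 1 + t / f j) l (nhds 1) := by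
    simpa using tendsto_const_nhds.add (hf.const_div_atTop t)
  refine ((Real.continuous_exp.tendsto _).comp hlog).congr' ?_
  filter_upwards [hf.eventually_gt_atTop 0, hbase.eventually_const_lt one_pos] with j hf0 hpos
  rw [Function.comp_apply, ← Real.rpow_natCast, Real.rpow_def_of_pos hpos]
  field_simp

theorem tendsto_natCast_sub_div {c : β → ℕ} {f : β → ℝ} {lam : ℝ} (hc : Tendsto c l atTop)
    (hf : Tendsto f l atTop) (hratio : Tendsto (fun j => (c j : ℝ) / f j) l (nhds lam)) (b : ℕ) :
    Tendsto (fun j => ((c j - b : ℕ) : ℝ) / f j) l (nhds lam) := by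
  have h := hratio.sub (hf.const_div_atTop (b : ℝ))
  rw [sub_zero] at h
  refine h.congr' ?_
  filter_upwards [hc.eventually_ge_atTop b] with j hj
  rw [Nat.cast_sub hj, sub_div]

end Limits

theorem sum_card_filter_sq {β γ : Type*} [Fintype β] (N : Finset γ) (P : β → γ → Prop)
    [∀ x, DecidablePred (P x)] :
    ∑ x, #{y ∈ N | P x y} ^ 2 = ∑ p ∈ N ×ˢ N, #{x | P x p.1 ∧ P x p.2} := by
  simp_rw [sq, ← card_product, ← filter_product, card_filter]
  exact Finset.sum_comm

section Counting

variable {ι α : Type*} [Fintype ι] [DecidableEq α]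

def fiber (x : ι → α) (y : α) : Finset ι := {i | x i = y}

@[simp] theorem mem_fiber {x : ι → α} {y : α} {i : ι} : i ∈ fiber x y ↔ x i = y := by
  simp [fiber]

variable [DecidableEq ι] [Fintype α]

theorem card_piFinset_ite_singleton_compl (D : Finset ι) (g : ι → α) (V : Finset α) :
    #(piFinset fun i => if i ∈ D then {g i} else Vᶜ) = (card α - #V) ^ (card ι - #D) := by
  rw [card_piFinset]
  simp only [apply_ite Finset.card, card_singleton, card_compl]
  rw [prod_ite, prod_const_one, one_mul, prod_const, filter_notMem_eq_sdiff, card_univ_sdiff]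

theorem filter_fiber_eq_eq_piFinset (y : α) (S : Finset ι) :
    ({x : ι → α | fiber x y = S} : Finset _) = piFinset fun i => if i ∈ S then {y} else {y}ᶜ := by
  ext x
  simp only [mem_filter, mem_univ, true_and, mem_piFinset, Finset.ext_iff, mem_fiber]
  refine forall_congr' fun i => ?_
  split_ifs with h <;> simp [h]

theorem filter_fiber_eq_and_fiber_eq_eq_piFinset {y z : α} (hyz : y ≠ z) {S T : Finset ι}
    (hST : Disjoint S T) :
    ({x : ι → α | fiber x y = S ∧ fiber x z = T} : Finset _) =
      piFinset fun i => if i ∈ S ∪ T then {if i ∈ S then y else z} else {y, z}ᶜ := by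
  ext x
  simp only [mem_filter, mem_univ, true_and, mem_piFinset, Finset.ext_iff, mem_fiber,
    ← forall_and]
  refine forall_congr' fun i => ?_
  have hiST : i ∈ S → i ∉ T := fun h => disjoint_left.mp hST h
  by_cases hS : i ∈ S <;> by_cases hT : i ∈ T <;> simp [hS, hT] <;> grind

theorem card_filter_card_fiber_eq_and (y : α) (k : ℕ) (P : (ι → α) → Prop) [DecidablePred P] :
    #{x | #(fiber x y) = k ∧ P x} = ∑ S ∈ powersetCard k univ, #{x | fiber x y = S ∧ P x} := by
  have hmaps : ∀ x ∈ ({x : ι → α | #(fiber x y) = k ∧ P x} : Finset _),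
      fiber x y ∈ powersetCard k univ := fun x hx => by simp_all
  rw [card_eq_sum_card_fiberwise hmaps]
  refine Finset.sum_congr rfl fun S hS => ?_
  rw [mem_powersetCard_univ] at hS
  rw [filter_filter]
  congr 1
  exact filter_congr fun x _ => ⟨fun h => ⟨h.2, h.1.2⟩, fun h => ⟨⟨h.1 ▸ hS, h.2⟩, h.1⟩⟩

theorem card_filter_card_fiber_eq (y : α) (k : ℕ) :
    #{x : ι → α | #(fiber x y) = k} = (card ι).choose k * (card α - 1) ^ (card ι - k) := by
  have h := card_filter_card_fiber_eq_and (ι := ι) y k fun _ => True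
  simp only [and_true] at h
  rw [h, Finset.sum_congr rfl fun S hS => ?_, sum_const, card_powersetCard, card_univ, smul_eq_mul]
  rw [filter_fiber_eq_eq_piFinset, card_piFinset_ite_singleton_compl, card_singleton,
    mem_powersetCard_univ.mp hS]

theorem card_filter_fiber_eq_and_card_fiber_eq {y z : α} (hyz : y ≠ z) (S : Finset ι) (l : ℕ) :
    #{x : ι → α | fiber x y = S ∧ #(fiber x z) = l} =
      (card ι - #S).choose l * (card α - 2) ^ (card ι - #S - l) := by
  have hmaps : ∀ x ∈ ({x : ι → α | fiber x y = S ∧ #(fiber x z) = l} : Finset _),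
      fiber x z ∈ powersetCard l Sᶜ := by
    intro x hx
    simp only [mem_filter, mem_univ, true_and] at hx
    refine mem_powersetCard.mpr ⟨fun i hi => ?_, hx.2⟩
    rw [← hx.1, mem_compl, mem_fiber, (mem_fiber.mp hi)]
    exact hyz.symm
  have hfiber : ∀ T ∈ powersetCard l Sᶜ,
      #{x ∈ ({x : ι → α | fiber x y = S ∧ #(fiber x z) = l} : Finset _) | fiber x z = T} =
        (card α - 2) ^ (card ι - #S - l) := by
    intro T hT
    rw [mem_powersetCard, subset_compl_iff_disjoint_left] at hT
    have hpred : ∀ x : ι → α, (fiber x y = S ∧ #(fiber x z) = l) ∧ fiber x z = T ↔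
        fiber x y = S ∧ fiber x z = T :=
      fun x => ⟨fun h => ⟨h.1.1, h.2⟩, fun h => ⟨⟨h.1, h.2 ▸ hT.2⟩, h.2⟩⟩
    rw [filter_filter, filter_congr fun x _ => hpred x,
      filter_fiber_eq_and_fiber_eq_eq_piFinset hyz hT.1, card_piFinset_ite_singleton_compl,
      card_pair hyz, card_union_of_disjoint hT.1, hT.2, Nat.sub_sub]
  rw [card_eq_sum_card_fiberwise hmaps, Finset.sum_congr rfl hfiber, sum_const, card_powersetCard,
    card_compl, smul_eq_mul]

theorem card_filter_card_fiber_eq_and_card_fiber_eq {y z : α} (hyz : y ≠ z) (k l : ℕ) :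
    #{x : ι → α | #(fiber x y) = k ∧ #(fiber x z) = l} =
      (card ι).choose k * ((card ι - k).choose l * (card α - 2) ^ (card ι - k - l)) := by
  rw [card_filter_card_fiber_eq_and, Finset.sum_congr rfl fun S hS => ?_, sum_const,
    card_powersetCard, card_univ, smul_eq_mul]
  rw [card_filter_fiber_eq_and_card_fiber_eq hyz, mem_powersetCard_univ.mp hS]

theorem sum_card_filter_card_fiber_eq_sq (N : Finset α) (k : ℕ) :
    ∑ x : ι → α, #{y ∈ N | #(fiber x y) = k} ^ 2 =
      #N * ((card ι).choose k * (card α - 1) ^ (card ι - k)) +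
        #N * (#N - 1) *
          ((card ι).choose k * ((card ι - k).choose k * (card α - 2) ^ (card ι - k - k))) := by
  have hdiag : ∀ p ∈ N.diag, #{x : ι → α | #(fiber x p.1) = k ∧ #(fiber x p.2) = k} =
      (card ι).choose k * (card α - 1) ^ (card ι - k) := by
    intro p hp
    simp only [(mem_diag.mp hp).2, and_self, card_filter_card_fiber_eq]
  have hoffDiag : ∀ p ∈ N.offDiag, #{x : ι → α | #(fiber x p.1) = k ∧ #(fiber x p.2) = k} =
      (card ι).choose k * ((card ι - k).choose k * (card α - 2) ^ (card ι - k - k)) :=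
    fun p hp => card_filter_card_fiber_eq_and_card_fiber_eq (mem_offDiag.mp hp).2.2 k k
  rw [sum_card_filter_sq, ← diag_union_offDiag, sum_union (disjoint_diag_offDiag N),
    Finset.sum_congr rfl hdiag, Finset.sum_congr rfl hoffDiag, sum_const, sum_const, diag_card,
    offDiag_card, smul_eq_mul, smul_eq_mul, Nat.mul_sub_one]

end Counting

theorem normalized_second_moment_eq {n M k : ℕ} (hk : 2 * k ≤ n) (hn : 0 < n) (hM : 2 ≤ M) :
    1 / ((n : ℝ) ^ 2 * (M : ℝ) ^ n) *
        ((n * (n.choose k * (M - 1) ^ (n - k)) +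
          n * (n - 1) * (n.choose k * ((n - k).choose k * (M - 2) ^ (n - k - k))) : ℕ) : ℝ) =
      (n : ℝ)⁻¹ * (n.choose k / (M : ℝ) ^ k * (1 + -1 / (M : ℝ)) ^ (n - k)) +
        (1 - (n : ℝ)⁻¹) * (n.choose k / (M : ℝ) ^ k * ((n - k).choose k / (M : ℝ) ^ k) *
          (1 + -2 / (M : ℝ)) ^ (n - k - k)) := by
  obtain ⟨a, rfl⟩ : ∃ a, n = a + k + k := ⟨n - k - k, by omega⟩
  have hM0 : (M : ℝ) ≠ 0 := by positivity
  have hn0 : (a : ℝ) + k + k ≠ 0 := by exact_mod_cast hn.ne'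
  have hbase : ∀ t : ℝ, 1 + -t / M = (M - t) / M := fun t => by field_simp; ring
  rw [hbase, hbase, div_pow, div_pow]
  push_cast [Nat.add_sub_cancel, Nat.cast_sub hn,
    Nat.cast_sub (by omega : 1 ≤ M), Nat.cast_sub hM, pow_add]
  field_simp

theorem normalized_second_moment_tendsto_general (lam : ℝ) (k : ℕ)
    (n M : ℕ → ℕ)
    (hn : Tendsto n atTop atTop) (hM : Tendsto M atTop atTop)
    (hratio : Tendsto (fun j => (n j : ℝ) / (M j : ℝ)) atTop (nhds lam))
    (𝓝 : ∀ j, Finset (Fin (M j))) (h𝓝 : ∀ j, (𝓝 j).card = n j) :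
    Tendsto (fun j =>
        (1 / ((n j : ℝ) ^ 2 * (M j : ℝ) ^ (n j))) * ∑ x : Fin (n j) → Fin (M j),
          ((((𝓝 j).filter (fun y =>
              (Finset.univ.filter (fun i : Fin (n j) => x i = y)).card = k)).card : ℝ)) ^ 2)
      atTop (nhds ((lam ^ k / (k.factorial : ℝ) * Real.exp (-lam)) ^ 2)) := by
  have hMr : Tendsto (fun j => (M j : ℝ)) atTop atTop := tendsto_natCast_atTop_atTop.comp hM
  have hnk : Tendsto (fun j => n j - k) atTop atTop := (tendsto_sub_atTop_nat k).comp hn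
  have hratio_k := tendsto_natCast_sub_div hn hMr hratio k
  have hratio_2k := tendsto_natCast_sub_div hnk hMr hratio_k k
  have hinv : Tendsto (fun j => (n j : ℝ)⁻¹) atTop (nhds 0) :=
    tendsto_inv_atTop_zero.comp (tendsto_natCast_atTop_atTop.comp hn)
  have hchoose := tendsto_choose_div_pow hn hratio k
  have hchoose' := tendsto_choose_div_pow hnk hratio_k k
  have hexp := tendsto_one_add_div_pow_exp_of_tendsto_div hMr hratio_k (-1)
  have hexp' := tendsto_one_add_div_pow_exp_of_tendsto_div hMr hratio_2k (-2)
  have hlim := (hinv.mul (hchoose.mul hexp)).add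
    (((tendsto_const_nhds (x := (1 : ℝ))).sub hinv).mul ((hchoose.mul hchoose').mul hexp'))
  have hvalue : 0 * (lam ^ k / k.factorial * Real.exp (lam * -1)) +
      (1 - 0) * (lam ^ k / k.factorial * (lam ^ k / k.factorial) * Real.exp (lam * -2)) =
      (lam ^ k / k.factorial * Real.exp (-lam)) ^ 2 := by
    rw [show lam * -2 = -lam + -lam by ring, Real.exp_add]
    ring
  rw [hvalue] at hlim
  refine hlim.congr' ?_
  filter_upwards [hn.eventually_ge_atTop (2 * k), hn.eventually_gt_atTop 0,
    hM.eventually_ge_atTop 2] with j h2k hnpos hM2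
  have hcount := sum_card_filter_card_fiber_eq_sq (ι := Fin (n j)) (𝓝 j) k
  rw [Fintype.card_fin, Fintype.card_fin, h𝓝] at hcount
  rw [← normalized_second_moment_eq h2k hnpos hM2, ← hcount]
  push_cast
  rfl

/-- If `n_j/M_j → λ ∈ (0,1]` with `k ≤ n_j ≤ M_j` and both `n_j, M_j → ∞`, then the normalized
second moments `S₂(k;M_j,n_j) = (1/(n_j² M_j^{n_j})) Σ_x m_k(x)²` converge to
`((λ^k/k!) e^{−λ})²`. -/
theorem normalized_second_moment_tendsto (lam : ℝ) (hlam0 : 0 < lam) (hlam1 : lam ≤ 1) (k : ℕ)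
    (n M : ℕ → ℕ) (hnpos : ∀ j, 0 < n j) (hMpos : ∀ j, 0 < M j)
    (hk : ∀ j, k ≤ n j) (hnM : ∀ j, n j ≤ M j)
    (hn : Tendsto n atTop atTop) (hM : Tendsto M atTop atTop)
    (hratio : Tendsto (fun j => (n j : ℝ) / (M j : ℝ)) atTop (nhds lam))
    (𝓝 : ∀ j, Finset (Fin (M j))) (h𝓝 : ∀ j, (𝓝 j).card = n j) :
    Tendsto (fun j =>
        (1 / ((n j : ℝ) ^ 2 * (M j : ℝ) ^ (n j))) * ∑ x : Fin (n j) → Fin (M j),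
          ((((𝓝 j).filter (fun y =>
              (Finset.univ.filter (fun i : Fin (n j) => x i = y)).card = k)).card : ℝ)) ^ 2)
      atTop (nhds ((lam ^ k / (k.factorial : ℝ) * Real.exp (-lam)) ^ 2)) :=
  normalized_second_moment_tendsto_general lam k n M hn hM hratio 𝓝 h𝓝
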